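/- For every integer k ≥ 2, every integer m ≥ 1, and every norm ‖·‖ on ℝ^m, if (X, d) is a coboundary k-metric in m dimensions with respect to ‖·‖ (i.e., (X, d) ∈ C_{k,‖·‖}^m), then (X, d) is a strong pseudo k-metric space. -/

import Mathlib

open scoped BigOperators

/-- An alternating real-valued function on `j`-tuples of `X`
(a `(j-1)`-dimensional chain on the complete complex on `X`). -/
def AltChain {X : Type*} {j : ℕ} (α : (Fin j → X) → ℝ) : Prop :=
  ∀ (π : Equiv.Perm (Fin j)) (x : Fin j → X),
    α (x ∘ π) = ((Equiv.Perm.sign π : ℤ) : ℝ) * α x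

/-- The boundary operator: `(∂α)(y₁,…,y_j) = ∑_{x ∈ X} α(x, y₁, …, y_j)`. -/
noncomputable def bdry {X : Type*} [Fintype X] {j : ℕ}
    (α : (Fin (j + 1) → X) → ℝ) : (Fin j → X) → ℝ :=
  fun y => ∑ x : X, α (Fin.cons x y)

/-- The elementary chain `1_t`: value `sign π` on the reordering of `t` by `π`,
and `0` on all other tuples. -/
noncomputable def unitChain {X : Type*} [DecidableEq X] {j : ℕ} (t : Fin j → X) :
    (Fin j → X) → ℝ :=
  fun s => ∑ π : Equiv.Perm (Fin j),
    if s = t ∘ π then ((Equiv.Perm.sign π : ℤ) : ℝ) else 0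

/-- The coboundary operator:
`(δf)(x₁,…,x_{j+2}) = ∑ᵢ (-1)^(i+1) f(x₁,…,x̂ᵢ,…,x_{j+2})` (`0`-indexed sign `(-1)^i`). -/
noncomputable def cobdry {X : Type*} {j : ℕ}
    (f : (Fin (j + 1) → X) → ℝ) : (Fin (j + 2) → X) → ℝ :=
  fun x => ∑ i : Fin (j + 2), (-1 : ℝ) ^ (i : ℕ) * f (x ∘ i.succAbove)

/-- A pseudo metric of arity `K` (a pseudo `K`-metric): nonnegative, vanishing on
non-injective tuples, permutation invariant, satisfying the simplex inequality. -/
structure IsPseudoMetric {X : Type*} (K : ℕ) (d : (Fin K → X) → ℝ) : Prop where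
  nonneg : ∀ x, 0 ≤ d x
  eq_zero : ∀ x, ¬ Function.Injective x → d x = 0
  perm : ∀ (π : Equiv.Perm (Fin K)) (x), d (x ∘ π) = d x
  simplex : ∀ (x : Fin K → X) (y : X),
    d x ≤ ∑ i : Fin K, d (Function.update x i y)

/-- A strong pseudo metric of arity `k + 1` (a strong pseudo `(k+1)`-metric).
The strong simplex inequality `d t ≤ ∑_τ |α(τ)| * d(τ)` (with the sum over
`(k+1)`-element subsets `τ` of `X`, each evaluated on any fixed ordering of `τ`)
is stated in the equivalent form `(k+1)! * d t ≤ ∑_s |α(s)| * d(s)` with the sum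
over all `(k+1)`-tuples `s`: since `α` is alternating and `d` is permutation
invariant, the summand depends only on the underlying set of `s` (it vanishes on
tuples with repeated entries), and each `(k+1)`-element subset has exactly
`(k+1)!` orderings. -/
structure IsStrongPseudoMetric {X : Type*} [Fintype X] [DecidableEq X] (k : ℕ)
    (d : (Fin (k + 1) → X) → ℝ) : Prop where
  nonneg : ∀ x, 0 ≤ d x
  eq_zero : ∀ x, ¬ Function.Injective x → d x = 0
  perm : ∀ (π : Equiv.Perm (Fin (k + 1))) (x), d (x ∘ π) = d x
  strong_simplex : ∀ t : Fin (k + 1) → X, Function.Injective t →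
    ∀ α : (Fin (k + 1) → X) → ℝ, AltChain α → bdry α = bdry (unitChain t) →
      ((k + 1).factorial : ℝ) * d t ≤ ∑ s : Fin (k + 1) → X, |α s| * d s

/-- `(X, d)` is a coboundary metric of arity `k + 2` in `m` dimensions with respect
to the norm `ν` on `ℝ^m`: there are chains `f 1, …, f m` on `(k+1)`-tuples (i.e.
`(k+2)-2`-dimensional chains for arity `k+2`) whose simultaneous coboundary
realizes `d` on injective tuples, and `d` vanishes on non-injective tuples. -/
def IsCoboundaryMetric {X : Type*} (k m : ℕ) (ν : (Fin m → ℝ) → ℝ)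
    (d : (Fin (k + 2) → X) → ℝ) : Prop :=
  ∃ f : Fin m → ((Fin (k + 1) → X) → ℝ),
    (∀ i, AltChain (f i)) ∧
    (∀ x, Function.Injective x → d x = ν (fun i => cobdry (f i) x)) ∧
    (∀ x, ¬ Function.Injective x → d x = 0)

/-- `ν` is a norm on `ℝ^m`. -/
structure IsNorm {m : ℕ} (ν : (Fin m → ℝ) → ℝ) : Prop where
  nonneg : ∀ x, 0 ≤ ν x
  eq_zero_iff : ∀ x, ν x = 0 ↔ x = 0
  homog : ∀ (c : ℝ) (x), ν (c • x) = |c| * ν x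
  triangle : ∀ x y, ν (x + y) ≤ ν x + ν y

/-- The `ℓ_p` norm on `ℝ^m` for real `p`. -/
noncomputable def lpNorm (p : ℝ) {m : ℕ} (x : Fin m → ℝ) : ℝ :=
  (∑ i, |x i| ^ p) ^ (1 / p)

/-- The `ℓ_1` norm on `ℝ^m`. -/
noncomputable def l1Norm {m : ℕ} (x : Fin m → ℝ) : ℝ := ∑ i, |x i|

/-- The `ℓ_2` (Euclidean) norm on `ℝ^m`. -/
noncomputable def l2Norm {m : ℕ} (x : Fin m → ℝ) : ℝ := Real.sqrt (∑ i, x i ^ 2)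

/-- The `ℓ_∞` norm on `ℝ^m` (the sup norm, which is the norm of `Fin m → ℝ`). -/
noncomputable def linfNorm {m : ℕ} (x : Fin m → ℝ) : ℝ := ‖x‖

/- The apex extension of `d` (of arity `K`), with the apex being
`none : Option X` (a new element not in `X`): on an injective `(K+1)`-tuple
containing the apex in position `i` it is `d` of the tuple with position `i`
removed, and it is `0` on all other tuples. -/
open Classical in
noncomputable def apexExt {X : Type*} {K : ℕ} (d : (Fin K → X) → ℝ) :
    (Fin (K + 1) → Option X) → ℝ := fun x =>
  if h : Function.Injective x ∧ ∃ i, x i = none then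
    d (fun j =>
      Option.get (x ((Classical.choose h.2).succAbove j))
        (by
          rw [Option.isSome_iff_ne_none]
          intro hnone
          exact Fin.succAbove_ne (Classical.choose h.2) j
            (h.1 (hnone.trans (Classical.choose_spec h.2).symm))))
  else 0

/-- The `K`-dimensional volume of the simplex with vertices `y 0, …, y K` in `ℝ^m`:
`(1/K!) * √(det (AᵀA))` where `A` is the `m × K` matrix with columns
`y i - y 0`, `i = 1, …, K`. -/
noncomputable def simplexVolume {m K : ℕ} (y : Fin (K + 1) → (Fin m → ℝ)) : ℝ :=
  (1 / (K.factorial : ℝ)) *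
    Real.sqrt
      (Matrix.det
        (Matrix.of fun i j : Fin K =>
          ∑ l : Fin m, (y i.succ l - y 0 l) * (y j.succ l - y 0 l)))

/-!
Write `d = ν ∘ g` with `g = (δf₁, …, δf_m)`; this holds on all tuples because coboundaries of
alternating chains are alternating. The coboundary is adjoint to the boundary:
`∑ₛ α(s) δf(s) = (k+2) ∑_y ∂α(y) f(y)`. Hence any `α` with `∂α = ∂1_t` satisfies
`∑ₛ α(s) g(s) = ∑ₛ 1_t(s) g(s) = (k+2)! g(t)`, and the strong simplex inequality is the
triangle inequality for `ν` applied to this vector identity.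
-/

open Equiv Equiv.Perm

lemma sign_cast_mul_self {ι : Type*} [Fintype ι] [DecidableEq ι] (σ : Perm ι) :
    ((sign σ : ℤ) : ℝ) * ((sign σ : ℤ) : ℝ) = 1 := by
  rcases Int.units_eq_one_or (sign σ) with h | h <;> simp [h]

lemma abs_sign_cast {ι : Type*} [Fintype ι] [DecidableEq ι] (σ : Perm ι) :
    |((sign σ : ℤ) : ℝ)| = 1 := by
  rcases Int.units_eq_one_or (sign σ) with h | h <;> simp [h]

namespace AltChain

variable {X : Type*} {j : ℕ} {α : (Fin j → X) → ℝ}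

lemma sign_mul_apply_comp (hα : AltChain α) (π : Perm (Fin j)) (x : Fin j → X) :
    ((sign π : ℤ) : ℝ) * α (x ∘ π) = α x := by
  rw [hα, ← mul_assoc, sign_cast_mul_self, one_mul]

lemma apply_eq_zero_of_not_injective (hα : AltChain α) {x : Fin j → X}
    (hx : ¬ Function.Injective x) : α x = 0 := by
  obtain ⟨a, b, hab, hne⟩ : ∃ a b, x a = x b ∧ a ≠ b := by
    simpa [Function.Injective] using hx
  have hswap : x ∘ swap a b = x := by
    funext c
    rcases eq_or_ne c a with rfl | hca
    · simp [hab]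
    rcases eq_or_ne c b with rfl | hcb
    · simp [hab]
    · simp [swap_apply_of_ne_of_ne hca hcb]
  have := hα (swap a b) x
  rw [hswap, sign_swap hne] at this
  push_cast at this
  linarith

end AltChain

section Coboundary

variable {X : Type*} {k : ℕ}

lemma sum_sign_mul_comp_succ_eq {f : (Fin (k + 1) → X) → ℝ} (hf : AltChain f)
    (x : Fin (k + 2) → X) :
    ∑ π : Perm (Fin (k + 2)), ((sign π : ℤ) : ℝ) * f (x ∘ π ∘ Fin.succ)
      = ((k + 1).factorial : ℝ) * cobdry f x := by
  -- `π` is split into `p = π 0` and the permutation `e` with `π ∘ succ = p.succAbove ∘ e`.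
  set φ : Fin (k + 2) × Perm (Fin (k + 1)) → Perm (Fin (k + 2)) :=
    fun pe => pe.1.cycleRange.symm * decomposeFin.symm (0, pe.2)
  have hφ_zero : ∀ p e, φ (p, e) 0 = p := by simp [φ]
  have hφ_succ : ∀ p e i, φ (p, e) i.succ = p.succAbove (e i) := by simp [φ]
  have hφ : Function.Bijective φ := by
    refine (Fintype.bijective_iff_injective_and_card φ).2
      ⟨?_, by simp [Fintype.card_perm, Nat.factorial_succ]⟩
    rintro ⟨p, e⟩ ⟨q, u⟩ h
    obtain rfl : p = q := by simpa [hφ_zero] using DFunLike.congr_fun h 0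
    refine Prod.ext rfl (Equiv.ext fun i => p.succAbove_right_injective ?_)
    simpa [hφ_succ] using DFunLike.congr_fun h i.succ
  rw [← Fintype.sum_bijective φ hφ (fun pe => (-1 : ℝ) ^ (pe.1 : ℕ) * f (x ∘ pe.1.succAbove))]
  · simp [Fintype.sum_prod_type, cobdry, Finset.mul_sum, Fintype.card_perm]
  · rintro ⟨p, e⟩
    have hcomp : x ∘ φ (p, e) ∘ Fin.succ = (x ∘ p.succAbove) ∘ e :=
      funext fun i => by simp [hφ_succ]
    rw [hcomp, ← hf.sign_mul_apply_comp e]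
    simp [φ, Fin.sign_cycleRange, decomposeFin.symm_sign, mul_assoc]

lemma altChain_cobdry {f : (Fin (k + 1) → X) → ℝ} (hf : AltChain f) : AltChain (cobdry f) := by
  intro σ x
  have hfac : ((k + 1).factorial : ℝ) ≠ 0 := by positivity
  apply mul_left_cancel₀ hfac
  rw [← sum_sign_mul_comp_succ_eq hf, mul_left_comm, ← sum_sign_mul_comp_succ_eq hf,
    Finset.mul_sum]
  refine Fintype.sum_bijective (σ * ·) (Group.mulLeft_bijective σ) _ _ fun π => ?_
  rw [coe_mul, map_mul, Units.val_mul, Int.cast_mul, ← mul_assoc, ← mul_assoc,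
    sign_cast_mul_self, one_mul]
  rfl

lemma sum_mul_cobdry_eq [Fintype X] {α : (Fin (k + 2) → X) → ℝ} (hα : AltChain α)
    (f : (Fin (k + 1) → X) → ℝ) :
    ∑ s, α s * cobdry f s = ((k + 2 : ℕ) : ℝ) * ∑ y, bdry α y * f y := by
  have hface : ∀ i : Fin (k + 2),
      ∑ s, α s * ((-1 : ℝ) ^ (i : ℕ) * f (s ∘ i.succAbove)) = ∑ y, bdry α y * f y := by
    intro i
    rw [← (Fin.insertNthEquiv (fun _ => X) i).sum_comp, Fintype.sum_prod_type, Finset.sum_comm]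
    refine Finset.sum_congr rfl fun y _ => ?_
    rw [bdry, Finset.sum_mul]
    refine Finset.sum_congr rfl fun a _ => ?_
    -- moving the inserted entry to the front costs the sign `(-1)^i`, which cancels
    have hins : α (i.insertNth a y) = (-1 : ℝ) ^ (i : ℕ) * α (Fin.cons a y) := by
      rw [← Fin.cons_comp_cycleRange, hα, Fin.sign_cycleRange]
      push_cast
      rfl
    change α (i.insertNth a y) * (_ * f (i.insertNth a y ∘ i.succAbove)) = _
    rw [hins, Fin.insertNth_comp_succAbove]
    linear_combination (α (Fin.cons a y) * f y) *
      (Even.neg_one_pow ⟨(i : ℕ), rfl⟩ : (-1 : ℝ) ^ ((i : ℕ) + i) = 1)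
  simp only [cobdry, Finset.mul_sum]
  rw [Finset.sum_comm, Finset.sum_congr rfl fun i _ => hface i]
  simp [Finset.mul_sum]

end Coboundary

section UnitChain

variable {X : Type*} [DecidableEq X] {j : ℕ}

lemma altChain_unitChain (t : Fin j → X) : AltChain (unitChain t) := by
  intro σ x
  simp only [unitChain, Finset.mul_sum]
  refine (Fintype.sum_bijective (· * σ) (Group.mulRight_bijective σ) _ _ fun π => ?_).symm
  have hiff : x ∘ σ = t ∘ ⇑(π * σ) ↔ x = t ∘ π := by
    rw [coe_mul, ← Function.comp_assoc]
    exact σ.surjective.injective_comp_right.eq_iff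
  simp only [hiff, map_mul, Units.val_mul, Int.cast_mul]
  split_ifs <;> simp [mul_comm]

lemma sum_unitChain_mul [Fintype X] (t : Fin j → X) {g : (Fin j → X) → ℝ} (hg : AltChain g) :
    ∑ s, unitChain t s * g s = (j.factorial : ℝ) * g t := by
  simp only [unitChain, Finset.sum_mul, ite_mul, zero_mul]
  rw [Finset.sum_comm]
  simp [hg.sign_mul_apply_comp, Fintype.card_perm]

lemma sum_mul_cobdry_eq_of_bdry_eq [Fintype X] {k : ℕ} {f : (Fin (k + 1) → X) → ℝ}
    (hf : AltChain f) {t : Fin (k + 2) → X} {α : (Fin (k + 2) → X) → ℝ} (hα : AltChain α)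
    (hb : bdry α = bdry (unitChain t)) :
    ∑ s, α s * cobdry f s = ((k + 2).factorial : ℝ) * cobdry f t := by
  rw [sum_mul_cobdry_eq hα, hb, ← sum_mul_cobdry_eq (altChain_unitChain t),
    sum_unitChain_mul t (altChain_cobdry hf)]

end UnitChain

namespace IsNorm

variable {m : ℕ} {ν : (Fin m → ℝ) → ℝ}

lemma map_zero (hν : IsNorm ν) : ν 0 = 0 := (hν.eq_zero_iff 0).2 rfl

lemma map_sum_le (hν : IsNorm ν) {ι : Type*} (s : Finset ι) (v : ι → Fin m → ℝ) :
    ν (∑ i ∈ s, v i) ≤ ∑ i ∈ s, ν (v i) :=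
  Finset.le_sum_of_subadditive ν hν.map_zero.le hν.triangle s v

end IsNorm

theorem isStrongPseudoMetric_norm_cobdry {X : Type*} [Fintype X] [DecidableEq X] {k m : ℕ}
    {ν : (Fin m → ℝ) → ℝ} (hν : IsNorm ν) {f : Fin m → (Fin (k + 1) → X) → ℝ}
    (hf : ∀ i, AltChain (f i)) :
    IsStrongPseudoMetric (k + 1) fun x => ν fun i => cobdry (f i) x where
  nonneg _ := hν.nonneg _
  eq_zero x hx := by
    simp only [(altChain_cobdry (hf _)).apply_eq_zero_of_not_injective hx]
    exact hν.map_zero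
  perm π x := by
    have hsign : (fun i => cobdry (f i) (x ∘ π)) = ((sign π : ℤ) : ℝ) • fun i => cobdry (f i) x :=
      funext fun i => altChain_cobdry (hf i) π x
    rw [hsign, hν.homog, abs_sign_cast, one_mul]
  strong_simplex t _ α hα hb := by
    have hvec : ∑ s, α s • (fun i => cobdry (f i) s)
        = ((k + 2).factorial : ℝ) • fun i => cobdry (f i) t := by
      funext i
      simpa using sum_mul_cobdry_eq_of_bdry_eq (hf i) hα hb
    calc ((k + 2).factorial : ℝ) * ν (fun i => cobdry (f i) t)
        = ν (∑ s, α s • fun i => cobdry (f i) s) := by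
          rw [hvec, hν.homog, abs_of_nonneg (by positivity)]
      _ ≤ ∑ s, ν (α s • fun i => cobdry (f i) s) := hν.map_sum_le _ _
      _ = ∑ s, |α s| * ν (fun i => cobdry (f i) s) := by simp_rw [hν.homog]

theorem stmt_3_general (k m : ℕ) (ν : (Fin m → ℝ) → ℝ) (hν : IsNorm ν)
    {X : Type*} [Fintype X] [DecidableEq X] (d : (Fin (k + 2) → X) → ℝ)
    (hd : IsCoboundaryMetric k m ν d) :
    IsStrongPseudoMetric (k + 1) d := by
  obtain ⟨f, hf, hd_inj, hd_not_inj⟩ := hd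
  have hnorm := isStrongPseudoMetric_norm_cobdry hν hf
  have hd_eq : d = fun x => ν fun i => cobdry (f i) x := by
    funext x
    by_cases hx : Function.Injective x
    · exact hd_inj x hx
    · rw [hd_not_inj x hx, hnorm.eq_zero x hx]
  exact hd_eq ▸ hnorm

/-- for every `k ≥ 2` (arity `k + 2`), every `m ≥ 1`, and every norm
`ν` on `ℝ^m`, a coboundary metric in `m` dimensions w.r.t. `ν` is a strong pseudo
metric. -/
theorem stmt_3 (k m : ℕ) (hm : 1 ≤ m) (ν : (Fin m → ℝ) → ℝ) (hν : IsNorm ν)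
    {X : Type*} [Fintype X] [DecidableEq X] (d : (Fin (k + 2) → X) → ℝ)
    (hd : IsCoboundaryMetric k m ν d) :
    IsStrongPseudoMetric (k + 1) d :=
  stmt_3_general k m ν hν d hd
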